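/- If A and B are subsets of an Abelian group G with A k-stable and B l-stable, then A ∪ B is r(k+1, l+1)+1-stable, where r denotes the two-colour Ramsey number. -/

import Mathlib

/-!
Let `a, b ∈ G^(R+1)` witness the order property of `A ∪ B`, with `R = r(k+1, l+1)`. For `i < j`
in `Fin R` the element `a (i+1) + b j` lies in `A ∪ B`; colour the pair `{i, j}` by whether it lies
in `A`. A chain of `k + 1` vertices of the first colour, or `l + 1` of the second, yields a
"strict" order pattern (`∈ iff i < j`) for `A`, resp. `B`, which shifts to the `k`-, resp.
`l`-order property. The finiteness of `r(s, t)` is the Erdős–Szekeres recursion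
`r(s+1, t+1) ≤ r(s, t+1) + r(s+1, t) + 1`.
-/

/-- `A ⊆ G` has the `k`-order property if there are `a, b ∈ G^k`
with `a i + b j ∈ A` iff `i ≤ j`. -/
def HasOrderProperty {G : Type*} [AddCommGroup G] (A : Set G) (k : ℕ) : Prop :=
  ∃ a b : Fin k → G, ∀ i j : Fin k, (a i + b j ∈ A ↔ i ≤ j)

/-- `N` is Ramsey for the pair `(s, t)`: every 2-colouring of the edges of the
complete graph on `N` vertices contains either a complete graph on `s` vertices in
colour `true` or on `t` vertices in colour `false`. -/
def IsRamseyPair (s t N : ℕ) : Prop :=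
  ∀ c : Fin N → Fin N → Bool,
    (∃ f : Fin s → Fin N, StrictMono f ∧ ∀ i j : Fin s, i < j → c (f i) (f j) = true) ∨
    (∃ f : Fin t → Fin N, StrictMono f ∧ ∀ i j : Fin t, i < j → c (f i) (f j) = false)

/-- The two-colour Ramsey number `r(s, t)`. -/
noncomputable def ramseyNumber (s t : ℕ) : ℕ := sInf {N | IsRamseyPair s t N}

open Finset

section Ramsey

variable {α β : Type*} [Preorder α] [Preorder β]

def IsMonochromaticChain (c : α → α → Bool) (b : Bool) {s : ℕ} (f : Fin s → α) : Prop :=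
  StrictMono f ∧ ∀ i j, i < j → c (f i) (f j) = b

lemma IsMonochromaticChain.comp {c : α → α → Bool} {b : Bool} {s : ℕ} {e : β → α}
    {f : Fin s → β} (hf : IsMonochromaticChain (fun x y => c (e x) (e y)) b f)
    (he : StrictMono e) : IsMonochromaticChain c b (e ∘ f) :=
  ⟨he.comp hf.1, hf.2⟩

lemma IsMonochromaticChain.cons {c : α → α → Bool} {b : Bool} {s : ℕ} {f : Fin s → α} {x : α}
    (hf : IsMonochromaticChain c b f) (hx : ∀ i, x < f i ∧ c x (f i) = b) :
    IsMonochromaticChain c b (Fin.cons x f : Fin (s + 1) → α) := by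
  refine ⟨Fin.strictMono_cons.2 ⟨fun i => (hx i).1, hf.1⟩, fun i j hij => ?_⟩
  cases j using Fin.cases with
  | zero => exact absurd hij (Fin.not_lt_zero i)
  | succ j =>
    cases i using Fin.cases with
    | zero => exact (hx j).2
    | succ i => exact hf.2 i j (Fin.succ_lt_succ_iff.1 hij)

lemma Finset.exists_strictMono_fin_mem {γ : Type*} [LinearOrder γ] {S : Finset γ} {n : ℕ}
    (h : n ≤ #S) : ∃ e : Fin n → γ, StrictMono e ∧ ∀ i, e i ∈ S := by
  obtain ⟨T, hTS, hT⟩ := S.exists_subset_card_eq h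
  exact ⟨T.orderEmbOfFin hT, (T.orderEmbOfFin hT).strictMono,
    fun i => hTS (T.orderEmbOfFin_mem hT i)⟩

lemma Fin.exists_strictMono_forall_or_forall_not (m n : ℕ) (p : Fin (m + n) → Prop) :
    (∃ e : Fin m → Fin (m + n), StrictMono e ∧ ∀ i, p (e i)) ∨
      (∃ e : Fin n → Fin (m + n), StrictMono e ∧ ∀ i, ¬ p (e i)) := by
  classical
  have hcard := card_filter_add_card_filter_not (s := univ) p
  rw [card_univ, Fintype.card_fin] at hcard
  rcases le_or_gt m #(univ.filter p) with hm | hm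
  · obtain ⟨e, he, heS⟩ := exists_strictMono_fin_mem hm
    exact Or.inl ⟨e, he, fun i => (mem_filter.1 (heS i)).2⟩
  · obtain ⟨e, he, heS⟩ := exists_strictMono_fin_mem (S := univ.filter fun x => ¬ p x) (n := n) (by omega)
    exact Or.inr ⟨e, he, fun i => (mem_filter.1 (heS i)).2⟩


lemma isRamseyPair_iff {s t N : ℕ} : IsRamseyPair s t N ↔ ∀ c : Fin N → Fin N → Bool,
    (∃ f : Fin s → Fin N, IsMonochromaticChain c true f) ∨
      ∃ f : Fin t → Fin N, IsMonochromaticChain c false f :=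
  Iff.rfl

lemma isRamseyPair_succ_succ {s t N₁ N₂ : ℕ} (h₁ : IsRamseyPair s (t + 1) N₁)
    (h₂ : IsRamseyPair (s + 1) t N₂) : IsRamseyPair (s + 1) (t + 1) (N₁ + N₂ + 1) := by
  rw [isRamseyPair_iff] at h₁ h₂ ⊢
  intro c
  rcases Fin.exists_strictMono_forall_or_forall_not N₁ N₂ (fun j => c 0 j.succ = true) with
    ⟨e, he, hce⟩ | ⟨e, he, hce⟩
  · rcases h₁ (fun i j => c (e i).succ (e j).succ) with ⟨f, hf⟩ | ⟨f, hf⟩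
    · exact Or.inl ⟨_, (hf.comp (Fin.strictMono_succ.comp he)).cons
        fun i => ⟨Fin.succ_pos _, hce (f i)⟩⟩
    · exact Or.inr ⟨_, hf.comp (Fin.strictMono_succ.comp he)⟩
  · rcases h₂ (fun i j => c (e i).succ (e j).succ) with ⟨f, hf⟩ | ⟨f, hf⟩
    · exact Or.inl ⟨_, hf.comp (Fin.strictMono_succ.comp he)⟩
    · exact Or.inr ⟨_, (hf.comp (Fin.strictMono_succ.comp he)).cons
        fun i => ⟨Fin.succ_pos _, Bool.eq_false_iff.2 (hce (f i))⟩⟩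

lemma exists_isRamseyPair (s t : ℕ) : ∃ N, IsRamseyPair s t N := by
  induction s generalizing t with
  | zero => exact ⟨0, fun _ => Or.inl ⟨Fin.elim0, fun i => i.elim0, fun i => i.elim0⟩⟩
  | succ s ihs =>
    induction t with
    | zero => exact ⟨0, fun _ => Or.inr ⟨Fin.elim0, fun i => i.elim0, fun i => i.elim0⟩⟩
    | succ t iht =>
      obtain ⟨N₁, h₁⟩ := ihs (t + 1)
      obtain ⟨N₂, h₂⟩ := iht
      exact ⟨N₁ + N₂ + 1, isRamseyPair_succ_succ h₁ h₂⟩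

lemma isRamseyPair_ramseyNumber (s t : ℕ) : IsRamseyPair s t (ramseyNumber s t) :=
  Nat.sInf_mem (exists_isRamseyPair s t)

end Ramsey

section OrderProperty

variable {G : Type*} [AddCommGroup G]

lemma HasOrderProperty.of_mem_iff_lt {A : Set G} {k : ℕ} (a b : Fin (k + 1) → G)
    (h : ∀ i j, a i + b j ∈ A ↔ i < j) : HasOrderProperty A k :=
  ⟨fun i => a i.castSucc, fun j => b j.succ, fun _ _ => (h _ _).trans Fin.castSucc_lt_succ_iff⟩

lemma HasOrderProperty.of_subset_of_chain {C D : Set G} (hCD : C ⊆ D) {n m : ℕ}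
    {a b : Fin (n + 1) → G} (hab : ∀ i j, a i + b j ∈ D ↔ i ≤ j) {f : Fin (m + 1) → Fin n}
    (hf : StrictMono f) (hC : ∀ i j, i < j → a (f i).succ + b (f j).castSucc ∈ C) :
    HasOrderProperty C m :=
  of_mem_iff_lt (fun i => a (f i).succ) (fun j => b (f j).castSucc) fun i j =>
    ⟨fun hmem => hf.lt_iff_lt.1 (Fin.succ_le_castSucc_iff.1 ((hab _ _).1 (hCD hmem))), hC i j⟩

end OrderProperty

theorem union_stable {G : Type*} [AddCommGroup G] (A B : Set G) (k l : ℕ)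
    (hA : ¬ HasOrderProperty A k) (hB : ¬ HasOrderProperty B l) :
    ¬ HasOrderProperty (A ∪ B) (ramseyNumber (k + 1) (l + 1) + 1) := by
  classical
  rintro ⟨a, b, hab⟩
  rcases isRamseyPair_ramseyNumber (k + 1) (l + 1)
      (fun i j => decide (a i.succ + b j.castSucc ∈ A)) with ⟨f, hf, hfA⟩ | ⟨f, hf, hfB⟩
  · exact hA (.of_subset_of_chain Set.subset_union_left hab hf
      fun i j hij => of_decide_eq_true (hfA i j hij))
  · refine hB (.of_subset_of_chain Set.subset_union_right hab hf fun _ _ hij => ?_)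
    have hAB := (hab _ _).2 (Fin.succ_le_castSucc_iff.2 (hf hij))
    exact hAB.resolve_left (of_decide_eq_false (hfB _ _ hij))
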